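/- arXiv:1704.02869 — 2 statements merged into one kernel-verified Lean document; each statement's English description precedes it below -/
import Mathlib

section
/- For the star K_{1,n} with n ≥ 2, J(K_{1,n}) = 2 and J*(K_{1,n}) = n + 1. -/
/-!
If the closed neighbourhood of a vertex `v` meets all `k` colour classes, then `k ≤ deg v + 1`.
In a J-colouring this holds at every vertex, and a leaf of the star has degree one, so `J ≤ 2`;
colouring the centre and the leaves with two colours attains it. In a J*-colouring only internal
vertices are constrained, and the only one is the centre, of degree `n ≥ 2`, so `J* ≤ n + 1`;
giving all `n + 1` vertices distinct colours attains it.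
-/

open SimpleGraph

/-- A proper colouring of `G` with `k` colours in which every vertex's closed
neighbourhood meets every colour class (a J-colouring). -/
def IsJCol {V : Type*} (G : SimpleGraph V) {k : ℕ} (c : V → Fin k) : Prop :=
  (∀ u v, G.Adj u v → c u ≠ c v) ∧
  (∀ v : V, ∀ i : Fin k, ∃ u, (u = v ∨ G.Adj v u) ∧ c u = i)

/-- `G` admits a J-colouring with `k` colours. -/
def HasJCol {V : Type*} (G : SimpleGraph V) (k : ℕ) : Prop :=
  ∃ c : V → Fin k, IsJCol G c

/-- The J-chromatic number: the maximum number of colours in a J-colouring. -/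
noncomputable def Jnum {V : Type*} (G : SimpleGraph V) : ℕ :=
  sSup {k | HasJCol G k}

/-- A proper colouring in which every internal vertex (degree ≥ 2) has its closed
neighbourhood meeting every colour class (a J*-colouring). -/
def IsJStarCol {V : Type*} (G : SimpleGraph V) {k : ℕ} (c : V → Fin k) : Prop :=
  (∀ u v, G.Adj u v → c u ≠ c v) ∧
  (∀ v : V, (∃ a b, a ≠ b ∧ G.Adj v a ∧ G.Adj v b) →
    ∀ i : Fin k, ∃ u, (u = v ∨ G.Adj v u) ∧ c u = i)

/-- `G` admits a J*-colouring with `k` colours. -/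
def HasJStarCol {V : Type*} (G : SimpleGraph V) (k : ℕ) : Prop :=
  ∃ c : V → Fin k, IsJStarCol G c

/-- The modified J-chromatic number. -/
noncomputable def JStarNum {V : Type*} (G : SimpleGraph V) : ℕ :=
  sSup {k | HasJStarCol G k}

section ClosedNeighbourhood

variable {V : Type*} {G : SimpleGraph V} {k : ℕ} {c : V → Fin k}

theorem le_degree_add_one_of_closedNbhd_surj (v : V) [Fintype (G.neighborSet v)]
    (hc : ∀ i : Fin k, ∃ u, (u = v ∨ G.Adj v u) ∧ c u = i) : k ≤ G.degree v + 1 := by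
  classical
  have hsurj : (Finset.univ : Finset (Fin k)) ⊆ (insert v (G.neighborFinset v)).image c := by
    intro i _
    obtain ⟨u, hu, rfl⟩ := hc i
    exact Finset.mem_image_of_mem c (by simpa [or_comm] using hu)
  calc k = (Finset.univ : Finset (Fin k)).card := (Finset.card_fin k).symm
    _ ≤ ((insert v (G.neighborFinset v)).image c).card := Finset.card_le_card hsurj
    _ ≤ (insert v (G.neighborFinset v)).card := Finset.card_image_le
    _ ≤ G.degree v + 1 := by rw [← card_neighborFinset_eq_degree]; exact Finset.card_insert_le _ _

theorem IsJCol.le_degree_add_one (hc : IsJCol G c) (v : V) [Fintype (G.neighborSet v)] :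
    k ≤ G.degree v + 1 :=
  le_degree_add_one_of_closedNbhd_surj v (hc.2 v)

theorem IsJStarCol.le_degree_add_one (hc : IsJStarCol G c) {v a b : V} [Fintype (G.neighborSet v)]
    (hab : a ≠ b) (ha : G.Adj v a) (hb : G.Adj v b) : k ≤ G.degree v + 1 :=
  le_degree_add_one_of_closedNbhd_surj v (hc.2 v ⟨a, b, hab, ha, hb⟩)

end ClosedNeighbourhood

section CompleteBipartite

variable {V W : Type*}

theorem completeBipartiteGraph_neighborSet_inl (v : V) :
    (completeBipartiteGraph V W).neighborSet (Sum.inl v) = Set.range Sum.inr := by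
  ext (a | a) <;> simp

theorem completeBipartiteGraph_neighborSet_inr (w : W) :
    (completeBipartiteGraph V W).neighborSet (Sum.inr w) = Set.range Sum.inl := by
  ext (a | a) <;> simp

theorem completeBipartiteGraph_degree_inl [Finite W] (v : V)
    [Fintype ((completeBipartiteGraph V W).neighborSet (Sum.inl v))] :
    (completeBipartiteGraph V W).degree (Sum.inl v) = Nat.card W := by
  rw [← card_neighborSet_eq_degree, ← Nat.card_eq_fintype_card,
    completeBipartiteGraph_neighborSet_inl, Nat.card_range_of_injective Sum.inr_injective]

theorem completeBipartiteGraph_degree_inr [Finite V] (w : W)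
    [Fintype ((completeBipartiteGraph V W).neighborSet (Sum.inr w))] :
    (completeBipartiteGraph V W).degree (Sum.inr w) = Nat.card V := by
  rw [← card_neighborSet_eq_degree, ← Nat.card_eq_fintype_card,
    completeBipartiteGraph_neighborSet_inr, Nat.card_range_of_injective Sum.inl_injective]

theorem hasJCol_completeBipartiteGraph_two [Nonempty V] [Nonempty W] :
    HasJCol (completeBipartiteGraph V W) 2 := by
  refine ⟨Sum.elim (fun _ => 0) (fun _ => 1), ?_, ?_⟩
  · rintro (a | a) (b | b) hab <;> simp_all
  · rintro (a | a) i <;> fin_cases i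
    · exact ⟨Sum.inl a, Or.inl rfl, rfl⟩
    · exact ⟨Sum.inr (Classical.arbitrary W), Or.inr (by simp), rfl⟩
    · exact ⟨Sum.inl (Classical.arbitrary V), Or.inr (by simp), rfl⟩
    · exact ⟨Sum.inr a, Or.inl rfl, rfl⟩

end CompleteBipartite

section Star

variable {n : ℕ}

theorem hasJStarCol_star (n : ℕ) :
    HasJStarCol (completeBipartiteGraph (Fin 1) (Fin n)) (n + 1) := by
  refine ⟨Sum.elim (fun _ => 0) Fin.succ, ?_, ?_⟩
  · rintro (a | a) (b | b) hab <;> simp_all [(Fin.succ_ne_zero _).symm]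
  · rintro (a | a) ⟨x, y, hxy, hx, hy⟩ i
    · induction i using Fin.cases with
      | zero => exact ⟨Sum.inl a, Or.inl rfl, rfl⟩
      | succ j => exact ⟨Sum.inr j, Or.inr (by simp), rfl⟩
    · -- a leaf has the centre as its only neighbour, so it is never internal
      rcases x with x | x <;> rcases y with y | y <;> simp at hx hy
      exact absurd (congrArg Sum.inl (Subsingleton.elim x y)) hxy

theorem jnum_star (hn : 1 ≤ n) : Jnum (completeBipartiteGraph (Fin 1) (Fin n)) = 2 := by
  classical
  have : Nonempty (Fin n) := ⟨⟨0, hn⟩⟩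
  refine IsGreatest.csSup_eq ⟨hasJCol_completeBipartiteGraph_two, ?_⟩
  rintro k ⟨c, hc⟩
  simpa [completeBipartiteGraph_degree_inr] using hc.le_degree_add_one (Sum.inr ⟨0, hn⟩)

theorem jStarNum_star (hn : 2 ≤ n) :
    JStarNum (completeBipartiteGraph (Fin 1) (Fin n)) = n + 1 := by
  classical
  refine IsGreatest.csSup_eq ⟨hasJStarCol_star n, ?_⟩
  rintro k ⟨c, hc⟩
  have hleaves : (Sum.inr ⟨0, by omega⟩ : Fin 1 ⊕ Fin n) ≠ Sum.inr ⟨1, by omega⟩ := by simp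
  simpa [completeBipartiteGraph_degree_inl] using
    hc.le_degree_add_one hleaves (by simp) (by simp) (v := Sum.inl 0)

end Star

/-- For the star `K_{1,n}` with `n ≥ 2`, `J(K_{1,n}) = 2` and `J*(K_{1,n}) = n + 1`. -/
theorem star_Jnum_JStarNum (n : ℕ) (hn : 2 ≤ n) :
    Jnum (completeBipartiteGraph (Fin 1) (Fin n)) = 2 ∧
    JStarNum (completeBipartiteGraph (Fin 1) (Fin n)) = n + 1 :=
  ⟨jnum_star (by omega), jStarNum_star hn⟩
end

section
/- If graphs G and H both admit J-colourings, then the join G + H admits a J-colouring, and J(G + H) = J(G) + J(H). -/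
open SimpleGraph

/-- The join `G + H`: disjoint union of `G` and `H` with all edges in between. -/
def joinGraph {V W : Type*} (G : SimpleGraph V) (H : SimpleGraph W) :
    SimpleGraph (V ⊕ W) where
  Adj x y :=
    match x, y with
    | Sum.inl u, Sum.inl v => G.Adj u v
    | Sum.inr a, Sum.inr b => H.Adj a b
    | Sum.inl _, Sum.inr _ => True
    | Sum.inr _, Sum.inl _ => True
  symm := ⟨by rintro (u | a) (v | b) h <;> simp_all <;> exact h.symm⟩
  loopless := ⟨by rintro (u | a) h <;> simp_all⟩

/-!
In a J-colouring of `G + H` no colour can occur on both sides, since every vertex of `G` is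
adjacent to every vertex of `H`. Hence a vertex of `G` sees each colour used on `G` inside `G`
itself, so the colours used on each side form J-colourings of `G` and `H` after relabelling,
and the total number of colours is at most `J(G) + J(H)`. Conversely, optimal J-colourings of
`G` and `H` on disjoint palettes combine into a J-colouring of `G + H`: every colour of one side
is used somewhere on that side, and that vertex is adjacent to all of the other side.
-/

open Function

section JColouring

variable {V : Type*} {G : SimpleGraph V}

lemma IsJCol.surjective [Nonempty V] {k : ℕ} {c : V → Fin k} (hc : IsJCol G c) :
    Surjective c := fun i => by
  obtain ⟨u, -, hu⟩ := hc.2 (Classical.arbitrary V) i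
  exact ⟨u, hu⟩

lemma HasJCol.le_card [Finite V] [Nonempty V] {k : ℕ} (h : HasJCol G k) : k ≤ Nat.card V := by
  obtain ⟨c, hc⟩ := h
  simpa using Nat.card_le_card_of_surjective c hc.surjective

lemma HasJCol.le_Jnum [Finite V] [Nonempty V] {k : ℕ} (h : HasJCol G k) : k ≤ Jnum G :=
  le_csSup ⟨Nat.card V, fun _ hk => HasJCol.le_card hk⟩ h

lemma hasJCol_of_isEmpty [IsEmpty V] (k : ℕ) : HasJCol G k :=
  ⟨isEmptyElim, isEmptyElim, isEmptyElim⟩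

-- Every `k` is admissible, so the supremum is the junk value `sSup` of an unbounded set.
lemma Jnum_of_isEmpty [IsEmpty V] : Jnum G = 0 := by
  have : ¬ BddAbove {k | HasJCol G k} := fun ⟨b, hb⟩ =>
    b.not_succ_le_self (hb (hasJCol_of_isEmpty (b + 1)))
  rw [Jnum, csSup_of_not_bddAbove this, csSup_empty, bot_eq_zero]

lemma exists_isJCol_surjective_Jnum [Finite V] (h : ∃ k, HasJCol G k) :
    ∃ c : V → Fin (Jnum G), IsJCol G c ∧ Surjective c := by
  cases isEmpty_or_nonempty V
  · refine ⟨isEmptyElim, ⟨isEmptyElim, isEmptyElim⟩, fun i => ?_⟩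
    exact (Fin.cast Jnum_of_isEmpty i).elim0
  · obtain ⟨c, hc⟩ : HasJCol G (Jnum G) :=
      Nat.sSup_mem h ⟨Nat.card V, fun _ hk => HasJCol.le_card hk⟩
    exact ⟨c, hc, hc.surjective⟩

lemma hasJCol_ncard_range [Finite V] {α : Type*} (c : V → α)
    (hproper : ∀ u v, G.Adj u v → c u ≠ c v)
    (hdom : ∀ v w, ∃ u, (u = v ∨ G.Adj v u) ∧ c u = c w) :
    HasJCol G (Set.range c).ncard := by
  rw [← Nat.card_coe_set_eq]
  let e := Finite.equivFin (Set.range c)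
  refine ⟨fun v => e ⟨c v, v, rfl⟩, fun u v huv h => hproper u v huv ?_, fun v i => ?_⟩
  · exact congrArg Subtype.val (e.injective h)
  · obtain ⟨⟨_, w, rfl⟩, rfl⟩ := e.surjective i
    obtain ⟨u, hu, hcu⟩ := hdom v w
    exact ⟨u, hu, congrArg e (Subtype.ext hcu)⟩

lemma ncard_range_le_Jnum [Finite V] {α : Type*} (c : V → α)
    (hproper : ∀ u v, G.Adj u v → c u ≠ c v)
    (hdom : ∀ v w, ∃ u, (u = v ∨ G.Adj v u) ∧ c u = c w) :
    (Set.range c).ncard ≤ Jnum G := by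
  cases isEmpty_or_nonempty V
  · simp [Set.range_eq_empty]
  · exact (hasJCol_ncard_range c hproper hdom).le_Jnum

end JColouring

section Join

variable {V W : Type*} {G : SimpleGraph V} {H : SimpleGraph W}

@[simp] lemma joinGraph_adj_inl_inl {u v : V} :
    (joinGraph G H).Adj (Sum.inl u) (Sum.inl v) ↔ G.Adj u v := Iff.rfl

@[simp] lemma joinGraph_adj_inr_inr {u v : W} :
    (joinGraph G H).Adj (Sum.inr u) (Sum.inr v) ↔ H.Adj u v := Iff.rfl

@[simp] lemma joinGraph_adj_inl_inr (v : V) (w : W) :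
    (joinGraph G H).Adj (Sum.inl v) (Sum.inr w) := trivial

@[simp] lemma joinGraph_adj_inr_inl (w : W) (v : V) :
    (joinGraph G H).Adj (Sum.inr w) (Sum.inl v) := trivial

lemma IsJCol.join {kG kH : ℕ} {cG : V → Fin kG} {cH : W → Fin kH}
    (hG : IsJCol G cG) (hH : IsJCol H cH) (hsG : Surjective cG) (hsH : Surjective cH) :
    IsJCol (joinGraph G H) (Sum.elim (Fin.castAdd kH ∘ cG) (Fin.natAdd kG ∘ cH)) := by
  refine ⟨?_, fun x i => ?_⟩
  · rintro (u | u) (v | v) huv h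
    · exact hG.1 u v huv (Fin.castAdd_injective _ _ h)
    · simp only [Sum.elim_inl, Sum.elim_inr, comp_apply, Fin.ext_iff, Fin.val_castAdd,
        Fin.val_natAdd] at h
      omega
    · simp only [Sum.elim_inl, Sum.elim_inr, comp_apply, Fin.ext_iff, Fin.val_castAdd,
        Fin.val_natAdd] at h
      omega
    · exact hH.1 u v huv (Fin.natAdd_injective _ _ h)
  induction i using Fin.addCases with
  | left j =>
    obtain ⟨u, hu, rfl⟩ : ∃ u, (Sum.inl u = x ∨ (joinGraph G H).Adj x (Sum.inl u)) ∧ cG u = j := by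
      rcases x with v | w
      · obtain ⟨u, hu, hcu⟩ := hG.2 v j
        exact ⟨u, by simpa using hu, hcu⟩
      · obtain ⟨u, hcu⟩ := hsG j
        exact ⟨u, Or.inr (by simp), hcu⟩
    exact ⟨Sum.inl u, hu, rfl⟩
  | right j =>
    obtain ⟨u, hu, rfl⟩ : ∃ u, (Sum.inr u = x ∨ (joinGraph G H).Adj x (Sum.inr u)) ∧ cH u = j := by
      rcases x with v | w
      · obtain ⟨u, hcu⟩ := hsH j
        exact ⟨u, Or.inr (by simp), hcu⟩
      · obtain ⟨u, hu, hcu⟩ := hH.2 w j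
        exact ⟨u, by simpa using hu, hcu⟩
    exact ⟨Sum.inr u, hu, rfl⟩

lemma IsJCol.ncard_range_inl_le [Finite V] {k : ℕ} {c : V ⊕ W → Fin k}
    (hc : IsJCol (joinGraph G H) c) : (Set.range (c ∘ Sum.inl)).ncard ≤ Jnum G := by
  refine ncard_range_le_Jnum _ (fun u v huv => hc.1 _ _ huv) fun v w => ?_
  obtain ⟨u | u, hu, hcu⟩ := hc.2 (Sum.inl v) (c (Sum.inl w))
  · exact ⟨u, by simpa using hu, hcu⟩
  · exact (hc.1 _ _ (joinGraph_adj_inl_inr w u) hcu.symm).elim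

lemma IsJCol.ncard_range_inr_le [Finite W] {k : ℕ} {c : V ⊕ W → Fin k}
    (hc : IsJCol (joinGraph G H) c) : (Set.range (c ∘ Sum.inr)).ncard ≤ Jnum H := by
  refine ncard_range_le_Jnum _ (fun u v huv => hc.1 _ _ huv) fun v w => ?_
  obtain ⟨u | u, hu, hcu⟩ := hc.2 (Sum.inr v) (c (Sum.inr w))
  · exact (hc.1 _ _ (joinGraph_adj_inl_inr u w) hcu).elim
  · exact ⟨u, by simpa using hu, hcu⟩

lemma HasJCol.le_Jnum_add_Jnum [Finite V] [Finite W] [Nonempty (V ⊕ W)] {k : ℕ}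
    (h : HasJCol (joinGraph G H) k) : k ≤ Jnum G + Jnum H := by
  obtain ⟨c, hc⟩ := h
  calc k = (Set.range c).ncard := by simp [hc.surjective.range_eq]
    _ = (Set.range (c ∘ Sum.inl) ∪ Set.range (c ∘ Sum.inr)).ncard := by
      rw [← Set.Sum.elim_range, Sum.elim_comp_inl_inr]
    _ ≤ (Set.range (c ∘ Sum.inl)).ncard + (Set.range (c ∘ Sum.inr)).ncard :=
      Set.ncard_union_le _ _
    _ ≤ Jnum G + Jnum H := add_le_add hc.ncard_range_inl_le hc.ncard_range_inr_le

end Join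

/-- If `G` and `H` admit J-colourings, then so does `G + H`, and
`J(G + H) = J(G) + J(H)`. -/
theorem joinGraph_Jnum {V W : Type*} [Fintype V] [Fintype W]
    (G : SimpleGraph V) (H : SimpleGraph W)
    (hG : ∃ k, HasJCol G k) (hH : ∃ k, HasJCol H k) :
    (∃ k, HasJCol (joinGraph G H) k) ∧
    Jnum (joinGraph G H) = Jnum G + Jnum H := by
  obtain ⟨cG, hcG, hsG⟩ := exists_isJCol_surjective_Jnum hG
  obtain ⟨cH, hcH, hsH⟩ := exists_isJCol_surjective_Jnum hH
  have hjoin : HasJCol (joinGraph G H) (Jnum G + Jnum H) := ⟨_, hcG.join hcH hsG hsH⟩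
  refine ⟨⟨_, hjoin⟩, ?_⟩
  cases isEmpty_or_nonempty (V ⊕ W)
  · obtain ⟨_, _⟩ := isEmpty_sum.mp ‹_›
    simp only [Jnum_of_isEmpty]
  · exact IsGreatest.csSup_eq ⟨hjoin, fun _ hk => HasJCol.le_Jnum_add_Jnum hk⟩
end
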